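/- arXiv:1402.3091 — 2 statements merged into one kernel-verified Lean document; each statement's English description precedes it below -/
import Mathlib

section
/- For all N ≥ 1 and every integer a, the number of indices i with 0 ≤ i < 2^N and s(i) = a equals the binomial coefficient C(N-1, ⌊(N-a)/2⌋) (interpreted as 0 when ⌊(N-a)/2⌋ < 0 or > N-1). -/
def s : ℕ → ℤ
  | 0 => 0
  | n + 1 =>
    if (n + 1) % 2 = 0 then -s ((n + 1) / 2)
    else s (n / 2) + 1
decreasing_by all_goals omega

lemma s_zero : s 0 = 0 := by simp [s]

lemma s_even (n : ℕ) : s (2 * n) = - s n := by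
  cases n with
  | zero => simp [s]
  | succ m =>
    have h : 2 * (m + 1) = (2 * m + 1) + 1 := by ring
    rw [h, s, if_pos (by omega : (2 * m + 1 + 1) % 2 = 0),
      (by omega : (2 * m + 1 + 1) / 2 = m + 1)]

lemma s_odd (n : ℕ) : s (2 * n + 1) = s n + 1 := by
  rw [show 2 * n + 1 = (2 * n) + 1 from rfl, s, if_neg (by omega : ¬ (2 * n + 1) % 2 = 0),
    (by omega : (2 * n) / 2 = n)]

lemma split_count (n : ℕ) (P : ℕ → Prop) [DecidablePred P] :
    ((Finset.range (2 * n)).filter P).card =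
      ((Finset.range n).filter (fun j => P (2 * j))).card
        + ((Finset.range n).filter (fun j => P (2 * j + 1))).card := by
  have h : (Finset.range (2 * n)).filter P =
      (((Finset.range n).filter (fun j => P (2 * j))).image (fun j => 2 * j)) ∪
      (((Finset.range n).filter (fun j => P (2 * j + 1))).image (fun j => 2 * j + 1)) := by
    ext i
    simp only [Finset.mem_filter, Finset.mem_range, Finset.mem_union, Finset.mem_image]
    constructor
    · rintro ⟨hi, hP⟩
      rcases Nat.even_or_odd i with ⟨j, hj⟩ | ⟨j, hj⟩
      · exact Or.inl ⟨j, ⟨by omega, by rwa [show 2 * j = i by omega]⟩, by omega⟩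
      · exact Or.inr ⟨j, ⟨by omega, by rwa [show 2 * j + 1 = i by omega]⟩, by omega⟩
    · rintro (⟨j, ⟨hj, hP⟩, rfl⟩ | ⟨j, ⟨hj, hP⟩, rfl⟩) <;> exact ⟨by omega, hP⟩
  rw [h, Finset.card_union_of_disjoint,
    Finset.card_image_of_injective _ (fun x y h => by omega),
    Finset.card_image_of_injective _ (fun x y h => by omega)]
  rw [Finset.disjoint_left]
  rintro x hx hy
  simp only [Finset.mem_image] at hx hy
  obtain ⟨j, _, rfl⟩ := hx
  obtain ⟨j', _, hj'⟩ := hy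
  omega

lemma count_rec (n : ℕ) (a : ℤ) :
    ((Finset.range (2 ^ (n + 1))).filter (fun i => s i = a)).card =
      ((Finset.range (2 ^ n)).filter (fun i => s i = -a)).card
        + ((Finset.range (2 ^ n)).filter (fun i => s i = a - 1)).card := by
  rw [pow_succ, mul_comm, split_count]
  congr 1
  · exact congrArg Finset.card (Finset.filter_congr fun j _ => by
      rw [s_even]; constructor <;> intro h <;> omega)
  · exact congrArg Finset.card (Finset.filter_congr fun j _ => by
      rw [s_odd]; constructor <;> intro h <;> omega)

lemma arith (N : ℕ) (hN : 1 ≤ N) (a : ℤ) :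
    (if ((N : ℤ) + 1 - a) / 2 < 0 then 0
       else Nat.choose N ((((N : ℤ) + 1 - a) / 2).toNat)) =
    (if ((N : ℤ) - (-a)) / 2 < 0 then 0
       else Nat.choose (N - 1) ((((N : ℤ) - (-a)) / 2).toNat)) +
    (if ((N : ℤ) - (a - 1)) / 2 < 0 then 0
       else Nat.choose (N - 1) ((((N : ℤ) - (a - 1)) / 2).toNat)) := by
  obtain ⟨M, rfl⟩ : ∃ M, N = M + 1 := ⟨N - 1, by omega⟩
  simp only [Nat.add_sub_cancel]
  set k : ℤ := (((M : ℤ) + 1) + 1 - a) / 2 with hk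
  have h1 : (((M : ℤ) + 1) - (a - 1)) / 2 = k := by omega
  have h2 : (((M : ℤ) + 1) - (-a)) / 2 = ((M : ℤ) + 1) - k := by omega
  push_cast at h1 h2 ⊢
  rw [h1, h2]
  by_cases hkneg : k < 0
  · rw [if_pos hkneg, if_pos hkneg, if_neg (by omega), Nat.choose_eq_zero_of_lt (by omega)]
  · rw [if_neg hkneg, if_neg hkneg]
    by_cases hkN : ((M : ℤ) + 1) < k
    · rw [if_pos (by omega), Nat.choose_eq_zero_of_lt (by omega),
        Nat.choose_eq_zero_of_lt (by omega)]
    · rw [if_neg (by omega)]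
      have hj : k.toNat ≤ M + 1 := by omega
      have hNk : (((M : ℤ) + 1) - k).toNat = (M + 1) - k.toNat := by omega
      rw [hNk]
      rcases Nat.eq_zero_or_pos k.toNat with h0 | hpos
      · rw [h0, Nat.choose_zero_right, Nat.sub_zero,
          Nat.choose_eq_zero_of_lt (by omega), Nat.choose_zero_right]
      · obtain ⟨i, hi⟩ : ∃ i, k.toNat = i + 1 := ⟨k.toNat - 1, by omega⟩
        have hsymm : (M + 1) - (i + 1) = M - i := by omega
        rw [hi, hsymm, Nat.choose_symm (by omega), Nat.choose_succ_succ]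

theorem stmt6 (N : ℕ) (hN : 1 ≤ N) (a : ℤ) :
    ((Finset.range (2 ^ N)).filter (fun i => s i = a)).card =
      if ((N : ℤ) - a) / 2 < 0 then 0
      else Nat.choose (N - 1) ((((N : ℤ) - a) / 2).toNat) := by
  induction N, hN using Nat.le_induction generalizing a with
  | base =>
    have h0 : s 0 = 0 := s_zero
    have h1 : s 1 = 1 := by simpa [s_zero] using s_odd 0
    rw [show Finset.range (2 ^ 1) = ({0, 1} : Finset ℕ) by decide,
      Finset.filter_insert, Finset.filter_singleton, h0, h1]
    push_cast
    by_cases ha0 : (0 : ℤ) = a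
    · rw [if_pos ha0, if_neg (by omega), if_neg (by omega)]
      simp only [Finset.card_insert_of_notMem (Finset.notMem_empty 0), Finset.card_empty]
      rw [show ((1 : ℤ) - a) / 2 = 0 by omega]
      simp
    · by_cases ha1 : (1 : ℤ) = a
      · rw [if_neg ha0, if_pos ha1, if_neg (by omega)]
        simp only [Finset.card_singleton]
        rw [show ((1 : ℤ) - a) / 2 = 0 by omega]
        simp
      · rw [if_neg ha0, if_neg ha1]
        simp only [Finset.card_empty]
        by_cases h : ((1 : ℤ) - a) / 2 < 0
        · rw [if_pos h]
        · rw [if_neg h, Nat.choose_eq_zero_of_lt (by omega)]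
  | succ n hn ih =>
    rw [count_rec, ih, ih]
    simp only [Nat.add_sub_cancel]
    push_cast
    exact (arith n hn a).symm
end

section
/- If two identical blocks of length m ≥ 1 occur in the infinity series at positions p < q (i.e., s(p+i) = s(q+i) for all 0 ≤ i < m), and the occurrences are disjoint or adjacent (q ≥ p + m), then the gap satisfies q - p - m ≥ 2m. -/
lemma s_two_mul (k : ℕ) : s (2 * k) = - s k := by
  cases k with
  | zero => simp [s]
  | succ n =>
    rw [show 2 * (n+1) = (2*n+1) + 1 by ring, s]
    simp [Nat.mul_mod_right, show (2*n+1+1) % 2 = 0 by omega,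
      show (2*n+1+1)/2 = n+1 by omega]

lemma s_two_mul_add_one (k : ℕ) : s (2 * k + 1) = s k + 1 := by
  rw [show 2*k+1 = (2*k)+1 by rfl, s]
  simp [show (2*k+1) % 2 = 1 by omega, show (2*k)/2 = k by omega]

lemma dlem : ∀ n : ℕ, Odd (s (n+1) - s n) ∨ s (n+1) - s n < 0 := by
  intro n
  induction n using Nat.strong_induction_on with
  | _ n ih =>
    rcases Nat.even_or_odd n with ⟨k, hk⟩ | ⟨k, hk⟩
    · subst hk
      rw [show k + k + 1 = 2*k+1 by ring, show k + k = 2*k by ring,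
        s_two_mul, s_two_mul_add_one]
      exact Or.inl ⟨s k, by ring⟩
    · subst hk
      rcases Nat.even_or_odd k with ⟨j, hj⟩ | ⟨j, hj⟩
      · subst hj
        rw [show 2*(j+j)+1+1 = 2*(2*j+1) by ring, show 2*(j+j)+1 = 2*(2*j)+1 by ring,
          s_two_mul, s_two_mul_add_one, s_two_mul_add_one, s_two_mul]
        right; omega
      · subst hj
        rw [show 2*(2*j+1)+1+1 = 2*(2*(j+1)) by ring, show 2*(2*j+1)+1 = 2*(2*j+1)+1 by rfl,
          s_two_mul, s_two_mul, s_two_mul_add_one, s_two_mul_add_one]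
        have h := ih j (by omega)
        rcases h with ⟨c, hc⟩ | h
        · left; exact ⟨c - 1, by linarith⟩
        · right; linarith

lemma d_ne_zero (n : ℕ) : s (n+1) ≠ s n := by
  have := dlem n
  rcases this with ⟨c, hc⟩ | h
  · intro h; rw [h] at hc; omega
  · intro h2; rw [h2] at h; omega

lemma step2_ne (n : ℕ) : s (n+2) ≠ s n := by
  rcases Nat.even_or_odd n with ⟨k, hk⟩ | ⟨k, hk⟩ <;> subst hk
  · rw [show k+k+2 = 2*(k+1) by ring, show k+k = 2*k by ring, s_two_mul, s_two_mul]
    intro h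
    exact d_ne_zero k (by linarith)
  · rw [show 2*k+1+2 = 2*(k+1)+1 by ring, s_two_mul_add_one, s_two_mul_add_one]
    intro h
    exact d_ne_zero k (by linarith)

lemma key : ∀ m : ℕ, 1 ≤ m → ∀ p q : ℕ, p < q → p + m ≤ q →
    (∀ i < m, s (p+i) = s (q+i)) → 3 * m ≤ q - p := by
  intro m
  induction m using Nat.strong_induction_on with
  | _ m ih =>
    intro hm p q hpq hdisj hblk
    rcases eq_or_lt_of_le hm with hm1 | hm2
    · -- m = 1
      have h0 := hblk 0 (by omega)
      simp only [Nat.add_zero] at h0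
      by_contra hcon
      have : q = p + 1 ∨ q = p + 2 := by omega
      rcases this with rfl | rfl
      · exact d_ne_zero p h0.symm
      · exact step2_ne p h0.symm
    · -- m ≥ 2
      have h0 := hblk 0 (by omega)
      have h1 := hblk 1 (by omega)
      simp only [Nat.add_zero] at h0
      rcases Nat.even_or_odd p with ⟨a, hp⟩ | ⟨a, hp⟩ <;>
        rcases Nat.even_or_odd q with ⟨b, hq⟩ | ⟨b, hq⟩ <;> subst hp <;> subst hq
      · -- both even
        set m' := (m+1)/2 with hm'
        have hblk' : ∀ i < m', s (a+i) = s (b+i) := by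
          intro i hi
          have h := hblk (2*i) (by omega)
          rw [show a+a+2*i = 2*(a+i) by ring, show b+b+2*i = 2*(b+i) by ring,
            s_two_mul, s_two_mul] at h
          linarith
        have := ih m' (by omega) (by omega) a b (by omega) (by omega) hblk'
        omega
      · -- p even, q odd: contradiction
        exfalso
        rw [show a+a+1 = 2*a+1 by ring, show 2*b+1+1 = 2*(b+1) by ring,
          s_two_mul_add_one, s_two_mul] at h1
        rw [show a+a = 2*a by ring, s_two_mul, s_two_mul_add_one] at h0
        exact d_ne_zero b (by linarith)
      · -- p odd, q even: contradiction
        exfalso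
        rw [show 2*a+1+1 = 2*(a+1) by ring, show b+b+1 = 2*b+1 by ring,
          s_two_mul, s_two_mul_add_one] at h1
        rw [show b+b = 2*b by ring, s_two_mul, s_two_mul_add_one] at h0
        exact d_ne_zero a (by linarith)
      · -- both odd
        set m' := (m+1)/2 with hm'
        have hblk' : ∀ i < m', s (a+i) = s (b+i) := by
          intro i hi
          have h := hblk (2*i) (by omega)
          rw [show 2*a+1+2*i = 2*(a+i)+1 by ring, show 2*b+1+2*i = 2*(b+i)+1 by ring,
            s_two_mul_add_one, s_two_mul_add_one] at h
          linarith
        have := ih m' (by omega) (by omega) a b (by omega) (by omega) hblk'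
        omega

theorem stmt17 (m p q : ℕ) (hm : 1 ≤ m) (hpq : p < q) (hdisj : p + m ≤ q)
    (hblk : ∀ i < m, s (p + i) = s (q + i)) : 2 * m ≤ q - p - m := by
  have := key m hm p q hpq hdisj hblk
  omega
end
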